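/- Let f be an entire function of infinite order. Then, writing A(r) = max_{|z|=r} Re f(z), one has liminf_{r→∞} (log A(r))/(log r) = +∞. (Consequently exp∘f has infinite lower order.) -/

import Mathlib

open Filter

noncomputable def maxMod (f : ℂ → ℂ) (r : ℝ) : ℝ :=
  sSup ((fun z => ‖f z‖) '' Metric.sphere (0 : ℂ) r)

noncomputable def maxRe (f : ℂ → ℂ) (r : ℝ) : ℝ :=
  sSup ((fun z => (f z).re) '' Metric.sphere (0 : ℂ) r)

/-!
If `log A(r) / log r` stayed below some `N` along a sequence `r → ∞`, then `A(r) ≤ r ^ N` there,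
and Borel–Carathéodory bounds `|f|` on the circle of radius `r / 2` by `O(r ^ N)`. Cauchy's
estimates along these radii kill every Taylor coefficient of index `> N`, so `f` is a polynomial,
whose order is `0`.
-/

open Metric Set

theorem exists_frequently_le_pow_of_liminf_ne_top {g : ℝ → ℝ}
    (h : liminf (fun r : ℝ ↦ ((Real.log (g r) / Real.log r : ℝ) : EReal)) atTop ≠ ⊤) :
    ∃ N : ℕ, ∃ᶠ r in atTop, g r ≤ r ^ N := by
  obtain ⟨K, hK, -⟩ := EReal.lt_iff_exists_real_btwn.1 h.lt_top
  obtain ⟨N, hN⟩ := exists_nat_ge K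
  refine ⟨N, ((frequently_lt_of_liminf_lt (by isBoundedDefault) hK).and_eventually
    (eventually_gt_atTop 1)).mono fun r ⟨hr, hr₁⟩ ↦ ?_⟩
  have hlog : 0 < Real.log r := Real.log_pos hr₁
  rcases le_or_gt (g r) 0 with hg | hg
  · exact hg.trans (by positivity)
  · rw [EReal.coe_lt_coe_iff, div_lt_iff₀ hlog] at hr
    rw [← Real.log_le_log_iff hg (by positivity), Real.log_pow]
    nlinarith

section SphereBounds

variable {f : ℂ → ℂ} {r : ℝ} {z : ℂ}

theorem norm_le_of_forall_mem_sphere_norm_le {E : Type*} [NormedAddCommGroup E]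
    [NormedSpace ℂ E] {g : ℂ → E} (hg : Differentiable ℂ g) (hr : 0 < r) {B : ℝ}
    (hB : ∀ w ∈ sphere (0 : ℂ) r, ‖g w‖ ≤ B) (hz : ‖z‖ ≤ r) : ‖g z‖ ≤ B := by
  apply Complex.norm_le_of_forall_mem_frontier_norm_le isBounded_ball hg.diffContOnCl
  · rwa [frontier_ball 0 hr.ne']
  · rwa [closure_ball 0 hr.ne', mem_closedBall_zero_iff]

theorem norm_le_maxMod (hf : Continuous f) (hz : z ∈ sphere (0 : ℂ) r) : ‖f z‖ ≤ maxMod f r :=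
  le_csSup ((isCompact_sphere 0 r).image (continuous_norm.comp hf)).bddAbove ⟨z, hz, rfl⟩

theorem re_le_maxRe (hf : Continuous f) (hz : z ∈ sphere (0 : ℂ) r) : (f z).re ≤ maxRe f r :=
  le_csSup ((isCompact_sphere 0 r).image (Complex.continuous_re.comp hf)).bddAbove ⟨z, hz, rfl⟩

theorem maxMod_le (hr : 0 ≤ r) {B : ℝ} (hB : ∀ z ∈ sphere (0 : ℂ) r, ‖f z‖ ≤ B) :
    maxMod f r ≤ B :=
  csSup_le ((NormedSpace.sphere_nonempty.mpr hr).image _) (forall_mem_image.mpr hB)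

theorem norm_le_maxMod_of_norm_le (hf : Differentiable ℂ f) (hr : 0 < r) (hz : ‖z‖ ≤ r) :
    ‖f z‖ ≤ maxMod f r :=
  norm_le_of_forall_mem_sphere_norm_le hf hr (fun _ hw ↦ norm_le_maxMod hf.continuous hw) hz

/-- The maximum modulus principle applied to `exp ∘ f`. -/
theorem re_le_maxRe_of_norm_le (hf : Differentiable ℂ f) (hr : 0 < r) (hz : ‖z‖ ≤ r) :
    (f z).re ≤ maxRe f r := by
  have := norm_le_of_forall_mem_sphere_norm_le hf.cexp hr (B := Real.exp (maxRe f r))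
    (fun w hw ↦ by
      rw [Complex.norm_exp]
      exact Real.exp_le_exp.2 (re_le_maxRe hf.continuous hw)) hz
  rwa [Complex.norm_exp, Real.exp_le_exp] at this

end SphereBounds

section Growth

variable {f : ℂ → ℂ}

theorem borelCaratheodory_maxRe (hf : Differentiable ℂ f) {R : ℝ} (hR : 0 < R) {z : ℂ}
    (hz : ‖z‖ ≤ R) : ‖f z‖ ≤ 2 * max (maxRe f (2 * R)) 1 + 3 * ‖f 0‖ := by
  -- `Complex.borelCaratheodory` needs a positive bound on `Re f`.
  set M := max (maxRe f (2 * R)) 1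
  have hbc := Complex.borelCaratheodory (M := M) (lt_max_of_lt_right one_pos) hf.differentiableOn
    (fun w hw ↦ (re_le_maxRe_of_norm_le hf (by positivity) (mem_ball_zero_iff.1 hw).le).trans
      (le_max_left _ _)) (by positivity) (mem_ball_zero_iff.2 (by linarith))
  have hden : 0 < 2 * R - ‖z‖ := by linarith
  have h₁ : 2 * M * ‖z‖ / (2 * R - ‖z‖) ≤ 2 * M := by
    rw [div_le_iff₀ hden]
    nlinarith [le_max_right (maxRe f (2 * R)) 1]
  have h₂ : ‖f 0‖ * (2 * R + ‖z‖) / (2 * R - ‖z‖) ≤ 3 * ‖f 0‖ := by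
    rw [div_le_iff₀ hden]
    nlinarith [norm_nonneg (f 0)]
  linarith

theorem exists_frequently_norm_le_mul_pow_of_frequently_maxRe_le (hf : Differentiable ℂ f)
    {N : ℕ} (h : ∃ᶠ r in atTop, maxRe f r ≤ r ^ N) :
    ∃ C, ∃ᶠ R in atTop, ∀ z ∈ sphere (0 : ℂ) R, ‖f z‖ ≤ C * R ^ N := by
  have h₂ : ∃ᶠ R in atTop, maxRe f (2 * R) ≤ (2 * R) ^ N :=
    (tendsto_id.atTop_div_const two_pos).frequently
      (h.mono fun r hr ↦ by rwa [id, mul_div_cancel₀ r two_ne_zero])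
  refine ⟨2 ^ (N + 1) + 3 * ‖f 0‖, (h₂.and_eventually (eventually_ge_atTop 1)).mono ?_⟩
  rintro R ⟨hR, hR₁⟩ z hz
  have hRN : 1 ≤ R ^ N := one_le_pow₀ hR₁
  have hmax : max (maxRe f (2 * R)) 1 ≤ 2 ^ N * R ^ N := by
    rw [← mul_pow]
    exact max_le hR (one_le_pow₀ (by linarith))
  calc ‖f z‖ ≤ 2 * max (maxRe f (2 * R)) 1 + 3 * ‖f 0‖ :=
        borelCaratheodory_maxRe hf (by linarith) (mem_sphere_zero_iff_norm.1 hz).le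
    _ ≤ 2 * (2 ^ N * R ^ N) + 3 * ‖f 0‖ * R ^ N := by
        have : 3 * ‖f 0‖ ≤ 3 * ‖f 0‖ * R ^ N := le_mul_of_one_le_right (by positivity) hRN
        linarith
    _ = (2 ^ (N + 1) + 3 * ‖f 0‖) * R ^ N := by ring

theorem iteratedDeriv_eq_zero_of_frequently_norm_le_mul_pow (hf : Differentiable ℂ f)
    {C : ℝ} {N n : ℕ} (h : ∃ᶠ R in atTop, ∀ z ∈ sphere (0 : ℂ) R, ‖f z‖ ≤ C * R ^ N)
    (hn : N < n) : iteratedDeriv n f 0 = 0 := by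
  obtain ⟨k, rfl⟩ : ∃ k, n = N + k := ⟨n - N, by omega⟩
  have hlim : Tendsto (fun R : ℝ ↦ (N + k).factorial * C / R ^ k) atTop (nhds 0) :=
    tendsto_const_nhds.div_atTop (tendsto_pow_atTop (by omega))
  refine norm_le_zero_iff.1 (ge_of_tendsto_of_frequently hlim ?_)
  refine (h.and_eventually (eventually_gt_atTop 0)).mono fun R ⟨hR, hR₀⟩ ↦ ?_
  calc ‖iteratedDeriv (N + k) f 0‖ ≤ (N + k).factorial * (C * R ^ N) / R ^ (N + k) :=
        Complex.norm_iteratedDeriv_le_of_forall_mem_sphere_norm_le _ hR₀ hf.diffContOnCl hR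
    _ = (N + k).factorial * C / R ^ k := by
        rw [pow_add]
        field_simp

theorem exists_norm_le_mul_pow_of_iteratedDeriv_eq_zero (hf : Differentiable ℂ f) {N : ℕ}
    (h : ∀ n, N < n → iteratedDeriv n f 0 = 0) :
    ∃ C, ∀ z : ℂ, 1 ≤ ‖z‖ → ‖f z‖ ≤ C * ‖z‖ ^ N := by
  have hpoly (z : ℂ) :
      f z = ∑ n ∈ Finset.range (N + 1), (n.factorial : ℂ)⁻¹ * iteratedDeriv n f 0 * z ^ n := by
    rw [← Complex.taylorSeries_eq_of_entire' hf (c := 0) (z := z), sub_zero]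
    refine tsum_eq_sum fun n hn ↦ ?_
    rw [h n (by simpa using hn), mul_zero, zero_mul]
  refine ⟨∑ n ∈ Finset.range (N + 1), ‖(n.factorial : ℂ)⁻¹ * iteratedDeriv n f 0‖,
    fun z hz ↦ ?_⟩
  rw [hpoly z, Finset.sum_mul]
  refine (norm_sum_le _ _).trans (Finset.sum_le_sum fun n hn ↦ ?_)
  rw [norm_mul, norm_pow]
  exact mul_le_mul_of_nonneg_left (pow_le_pow_right₀ hz (Finset.mem_range_succ_iff.1 hn))
    (norm_nonneg _)

theorem exists_abs_log_maxMod_le (hf : Differentiable ℂ f) {C : ℝ} {N : ℕ}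
    (h : ∀ z : ℂ, 1 ≤ ‖z‖ → ‖f z‖ ≤ C * ‖z‖ ^ N) :
    ∃ K, ∀ᶠ r in atTop, |Real.log (maxMod f r)| ≤ K + N * Real.log r := by
  by_cases h₀ : ∀ z, f z = 0
  · refine ⟨0, (eventually_ge_atTop 1).mono fun r hr ↦ ?_⟩
    have hM : maxMod f r = 0 := by
      rw [maxMod, show (fun z ↦ ‖f z‖) = fun _ ↦ (0 : ℝ) by simp [h₀],
        (NormedSpace.sphere_nonempty.2 (by linarith)).image_const, csSup_singleton]
    rw [hM, Real.log_zero, abs_zero, zero_add]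
    exact mul_nonneg (Nat.cast_nonneg N) (Real.log_nonneg hr)
  obtain ⟨z₀, hz₀⟩ := not_forall.1 h₀
  refine ⟨|Real.log ‖f z₀‖| + |Real.log C|, ?_⟩
  filter_upwards [eventually_ge_atTop (max 1 ‖z₀‖)] with r hr
  have hr₁ : 1 ≤ r := le_of_max_le_left hr
  have hlow : ‖f z₀‖ ≤ maxMod f r :=
    norm_le_maxMod_of_norm_le hf (by linarith) (le_of_max_le_right hr)
  have hup : maxMod f r ≤ C * r ^ N := maxMod_le (by linarith) fun z hz ↦ by
    rw [mem_sphere_zero_iff_norm] at hz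
    simpa [hz] using h z (hz ▸ hr₁)
  have hpos : 0 < ‖f z₀‖ := norm_pos_iff.2 hz₀
  have hC : 0 < C := pos_of_mul_pos_left (hpos.trans_le (hlow.trans hup)) (by positivity)
  have hlog_low := Real.log_le_log hpos hlow
  have hlog_up := Real.log_le_log (hpos.trans_le hlow) hup
  rw [Real.log_mul hC.ne' (by positivity), Real.log_pow] at hlog_up
  have hlogr : 0 ≤ N * Real.log r := mul_nonneg (Nat.cast_nonneg N) (Real.log_nonneg hr₁)
  rw [abs_le]
  constructor <;> linarith [neg_abs_le (Real.log ‖f z₀‖), le_abs_self (Real.log C),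
    abs_nonneg (Real.log ‖f z₀‖), abs_nonneg (Real.log C)]

theorem limsup_log_log_maxMod_ne_top (hf : Differentiable ℂ f) {C : ℝ} {N : ℕ}
    (h : ∀ z : ℂ, 1 ≤ ‖z‖ → ‖f z‖ ≤ C * ‖z‖ ^ N) :
    limsup (fun r : ℝ ↦ ((Real.log (Real.log (maxMod f r)) / Real.log r : ℝ) : EReal)) atTop
      ≠ ⊤ := by
  obtain ⟨K, hK⟩ := exists_abs_log_maxMod_le hf h
  refine ne_top_of_le_ne_top (EReal.coe_ne_top (|K| + N))
    (limsup_le_of_le (by isBoundedDefault) ?_)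
  filter_upwards [hK, eventually_ge_atTop (Real.exp 1)] with r hr hre
  have hlog : 1 ≤ Real.log r := by rwa [Real.le_log_iff_exp_le ((Real.exp_pos 1).trans_le hre)]
  rw [EReal.coe_le_coe_iff, div_le_iff₀ (by linarith)]
  -- `Real.log x = Real.log |x|`, so a bound on `|log M(r)|` suffices even where `M(r) < 1`.
  calc Real.log (Real.log (maxMod f r)) ≤ |Real.log (maxMod f r)| := by
        rw [← Real.log_abs]
        exact Real.log_le_self (abs_nonneg _)
    _ ≤ K + N * Real.log r := hr
    _ ≤ (|K| + N) * Real.log r := by nlinarith [le_abs_self K, abs_nonneg K]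

end Growth

/-- If `f` is entire of infinite order then `liminf (log A(r))/(log r) = +∞`,
where `A(r) = max_{|z|=r} Re f(z)`. -/
theorem infinite_order_liminf_maxRe (f : ℂ → ℂ) (hf : Differentiable ℂ f)
    (hord : limsup (fun r : ℝ =>
        ((Real.log (Real.log (maxMod f r)) / Real.log r : ℝ) : EReal)) atTop = ⊤) :
    liminf (fun r : ℝ => ((Real.log (maxRe f r) / Real.log r : ℝ) : EReal)) atTop = ⊤ := by
  by_contra hA
  obtain ⟨N, hN⟩ := exists_frequently_le_pow_of_liminf_ne_top hA
  obtain ⟨C, hC⟩ := exists_frequently_norm_le_mul_pow_of_frequently_maxRe_le hf hN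
  obtain ⟨C', hC'⟩ := exists_norm_le_mul_pow_of_iteratedDeriv_eq_zero hf fun _ hn ↦
    iteratedDeriv_eq_zero_of_frequently_norm_le_mul_pow hf hC hn
  exact limsup_log_log_maxMod_ne_top hf hC' hord
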